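/- Let X ⊆ Fⁿ with 0 in the relative interior of conv_ℝ(X), and suppose conv_ℝ(X) is a polyhedron. Then Y ⊆ X is a positive weak F-face of X if and only if Y ≠ X and Y is a weak F-face of X. -/

import Mathlib

open scoped BigOperators RealInnerProductSpace
open Matrix

noncomputable section

variable {n : ℕ}

/-- The `F`-convex hull of a set `X ⊆ ℝⁿ`. -/
def convF (F : Subfield ℝ) (X : Set (EuclideanSpace ℝ (Fin n))) :
    Set (EuclideanSpace ℝ (Fin n)) :=
  { u | ∃ (k : ℕ) (r : Fin k → ℝ) (x : Fin k → EuclideanSpace ℝ (Fin n)),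
      (∀ j, r j ∈ F) ∧ (∀ j, 0 ≤ r j) ∧ (∀ j, x j ∈ X) ∧
      (∑ j, r j) = 1 ∧ (∑ j, r j • x j) = u }

/-- The `F`-relative interior of `conv_F(X)`. -/
def relintF (F : Subfield ℝ) (X : Set (EuclideanSpace ℝ (Fin n))) :
    Set (EuclideanSpace ℝ (Fin n)) :=
  { u | u ∈ convF F X ∧ ∀ y ∈ convF F X, ∃ z ∈ convF F X, ∃ t : ℝ,
      t ∈ F ∧ 0 < t ∧ t < 1 ∧ u = t • y + (1 - t) • z }

/-- `Y` is a weak `F`-face of `X`. -/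
def IsWeakFFace (F : Subfield ℝ) (X Y : Set (EuclideanSpace ℝ (Fin n))) : Prop :=
  Y ⊆ X ∧ ∀ U ⊆ X, (convF F Y ∩ relintF F U).Nonempty → U ⊆ Y

/-- `Y` is a positive weak `F`-face of `X`. -/
def IsPosWeakFFace (F : Subfield ℝ) (X Y : Set (EuclideanSpace ℝ (Fin n))) : Prop :=
  IsWeakFFace F X Y ∧ ∀ U ⊆ X, convF F Y ∩ relintF F (U ∪ {0}) = ∅

/-- `P` is a polyhedron: a finite intersection of affine half-spaces. -/
def IsPolyhedron (P : Set (EuclideanSpace ℝ (Fin n))) : Prop :=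
  ∃ (k : ℕ) (v : Fin k → EuclideanSpace ℝ (Fin n)) (c : Fin k → ℝ),
    P = {u | ∀ j, ⟪v j, u⟫ ≤ c j}

/-- The relative interior of a convex set, in the combinatorial sense. -/
def relintSet (C : Set (EuclideanSpace ℝ (Fin n))) : Set (EuclideanSpace ℝ (Fin n)) :=
  { x | x ∈ C ∧ ∀ y ∈ C, ∃ z ∈ C, ∃ t : ℝ, 0 < t ∧ t < 1 ∧ x = t • y + (1 - t) • z }

lemma det_mem' (F : Subfield ℝ) {m : ℕ} {M : Matrix (Fin m) (Fin m) ℝ}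
    (h : ∀ i j, M i j ∈ F) : M.det ∈ F := by
  rw [Matrix.det_apply']
  exact sum_mem fun σ _ => mul_mem (intCast_mem F _) (prod_mem fun i _ => h _ _)

lemma gram_weights_mem (F : Subfield ℝ) {m : ℕ}
    {x : Fin m → EuclideanSpace ℝ (Fin n)} {q : EuclideanSpace ℝ (Fin n)} {ω : Fin m → ℝ}
    (hai : AffineIndependent ℝ x)
    (hxF : ∀ j i, x j i ∈ F) (hqF : ∀ i, q i ∈ F)
    (hw1 : ∑ j, ω j = 1) (hq : ∑ j, ω j • x j = q) :
    ∀ j, ω j ∈ F := by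
  classical
  set G : Matrix (Fin m) (Fin m) ℝ :=
    Matrix.of fun j k => (∑ i, x j i * x k i) + 1 with hG
  set β : Fin m → ℝ := fun j => (∑ i, x j i * q i) + 1 with hβ
  have hcoord : ∀ i, q i = ∑ j, ω j * x j i := by
    intro i
    rw [← hq]
    rw [WithLp.ofLp_sum, Finset.sum_apply i Finset.univ fun j => (ω j • x j).ofLp]
    exact Finset.sum_congr rfl fun j _ => rfl
  have hmul : G *ᵥ ω = β := by
    funext j
    simp only [Matrix.mulVec, dotProduct, Matrix.of_apply, hG, hβ]
    have step : ∀ k, ((∑ i, x j i * x k i) + 1) * ω k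
        = (∑ i, x j i * (ω k * x k i)) + ω k := by
      intro k
      rw [add_mul, one_mul, Finset.sum_mul]
      congr 1
      exact Finset.sum_congr rfl fun i _ => by ring
    rw [Finset.sum_congr rfl fun k _ => step k, Finset.sum_add_distrib, hw1,
      Finset.sum_comm]
    congr 1
    refine Finset.sum_congr rfl fun i _ => ?_
    rw [← Finset.mul_sum, ← hcoord i]
  have expand : ∀ c : Fin m → ℝ, ∑ j, c j * (G *ᵥ c) j
      = (∑ i, (∑ j, c j * x j i) ^ 2) + (∑ j, c j) ^ 2 := by
    intro c
    simp only [Matrix.mulVec, dotProduct, Matrix.of_apply, hG]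
    have step : ∀ j, c j * (∑ k, ((∑ i, x j i * x k i) + 1) * c k)
        = (∑ k, ∑ i, (c j * x j i) * (c k * x k i)) + c j * (∑ k, c k) := by
      intro j
      rw [Finset.mul_sum, Finset.mul_sum, ← Finset.sum_add_distrib]
      refine Finset.sum_congr rfl fun k _ => ?_
      have h1 : (∑ i, (c j * x j i) * (c k * x k i))
          = (c j * c k) * (∑ i, x j i * x k i) := by
        rw [Finset.mul_sum]
        exact Finset.sum_congr rfl fun i _ => by ring
      rw [h1]; ring
    rw [Finset.sum_congr rfl fun j _ => step j, Finset.sum_add_distrib]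
    congr 1
    · have h2 : ∀ j, (∑ k, ∑ i, (c j * x j i) * (c k * x k i))
          = ∑ i, ∑ k, (c j * x j i) * (c k * x k i) := fun j => Finset.sum_comm
      rw [Finset.sum_congr rfl fun j _ => h2 j, Finset.sum_comm]
      refine Finset.sum_congr rfl fun i _ => ?_
      rw [sq, Finset.sum_mul_sum]
    · rw [← Finset.sum_mul, sq]
  have hinj : ∀ c : Fin m → ℝ, G *ᵥ c = 0 → c = 0 := by
    intro c hc
    have key : (∑ i, (∑ j, c j * x j i) ^ 2) + (∑ j, c j) ^ 2 = 0 := by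
      rw [← expand c, hc]; simp
    have h1 : (0:ℝ) ≤ ∑ i, (∑ j, c j * x j i) ^ 2 :=
      Finset.sum_nonneg fun i _ => sq_nonneg _
    have h2 : (0:ℝ) ≤ (∑ j, c j) ^ 2 := sq_nonneg _
    have hz := (add_eq_zero_iff_of_nonneg h1 h2).1 key
    have hsum0 : ∑ j, c j = 0 := by
      have := hz.2; exact pow_eq_zero_iff (by norm_num) |>.1 this
    have hco : ∀ i, ∑ j, c j * x j i = 0 := by
      intro i
      have := (Finset.sum_eq_zero_iff_of_nonneg fun i _ => sq_nonneg _).1 hz.1 i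
        (Finset.mem_univ i)
      exact pow_eq_zero_iff (by norm_num) |>.1 this
    have hvec : ∑ j, c j • x j = 0 := by
      ext i
      rw [WithLp.ofLp_sum, Finset.sum_apply i Finset.univ fun j => (c j • x j).ofLp]
      exact hco i
    have := affineIndependent_iff.1 hai Finset.univ c hsum0 hvec
    funext j; exact this j (Finset.mem_univ j)
  have hdet : G.det ≠ 0 := by
    intro h
    obtain ⟨v, hv, hv0⟩ := Matrix.exists_mulVec_eq_zero_iff.2 h
    exact hv (hinj v hv0)
  have hsol : G *ᵥ ((G.det)⁻¹ • (Matrix.cramer G β)) = β := by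
    rw [Matrix.mulVec_smul, Matrix.mulVec_cramer, smul_smul, inv_mul_cancel₀ hdet, one_smul]
  have hω : ω = (G.det)⁻¹ • (Matrix.cramer G β) := by
    have hd : G *ᵥ (ω - (G.det)⁻¹ • (Matrix.cramer G β)) = 0 := by
      rw [Matrix.mulVec_sub, hmul, hsol, sub_self]
    exact sub_eq_zero.1 (hinj _ hd)
  have hGF : ∀ j k, G j k ∈ F := fun j k =>
    add_mem (sum_mem fun i _ => mul_mem (hxF j i) (hxF k i)) (one_mem F)
  have hβF : ∀ j, β j ∈ F := fun j =>
    add_mem (sum_mem fun i _ => mul_mem (hxF j i) (hqF i)) (one_mem F)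
  intro j
  rw [hω]
  have hcr : Matrix.cramer G β j ∈ F := by
    rw [Matrix.cramer_apply]
    refine det_mem' F fun a b => ?_
    rw [Matrix.updateCol_apply]
    split
    · exact hβF a
    · exact hGF a b
  exact mul_mem (inv_mem (det_mem' F hGF)) hcr

lemma mem_convF_of_mem (F : Subfield ℝ) {X : Set (EuclideanSpace ℝ (Fin n))}
    {x : EuclideanSpace ℝ (Fin n)} (hx : x ∈ X) : x ∈ convF F X := by
  refine ⟨1, fun _ => 1, fun _ => x, fun _ => one_mem F, fun _ => zero_le_one,
    fun _ => hx, by simp, by simp⟩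

lemma convF_mono (F : Subfield ℝ) {X Y : Set (EuclideanSpace ℝ (Fin n))} (h : Y ⊆ X) :
    convF F Y ⊆ convF F X := by
  rintro u ⟨k, r, x, h1, h2, h3, h4, h5⟩
  exact ⟨k, r, x, h1, h2, fun j => h (h3 j), h4, h5⟩

lemma convF_subset_convexHull (F : Subfield ℝ) (X : Set (EuclideanSpace ℝ (Fin n))) :
    convF F X ⊆ convexHull ℝ X := by
  rintro u ⟨k, r, x, _, h2, h3, h4, h5⟩
  rw [← h5]
  exact (convex_convexHull ℝ X).sum_mem (fun j _ => h2 j) h4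
    fun j _ => subset_convexHull ℝ X (h3 j)

lemma convF_coords (F : Subfield ℝ) {X : Set (EuclideanSpace ℝ (Fin n))}
    (hX : ∀ x ∈ X, ∀ i, x i ∈ F) {u : EuclideanSpace ℝ (Fin n)} (hu : u ∈ convF F X) :
    ∀ i, u i ∈ F := by
  obtain ⟨k, r, x, h1, _, h3, _, h5⟩ := hu
  intro i
  rw [← h5, WithLp.ofLp_sum, Finset.sum_apply i Finset.univ fun j => (r j • x j).ofLp]
  exact sum_mem fun j _ => mul_mem (h1 j) (hX (x j) (h3 j) i)

/-- Rationality: every point of the real convex hull with coordinates in `F`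
lies in the `F`-convex hull. -/

lemma lemmaA (F : Subfield ℝ) {X : Set (EuclideanSpace ℝ (Fin n))}
    (hX : ∀ x ∈ X, ∀ i, x i ∈ F) {q : EuclideanSpace ℝ (Fin n)}
    (hq : q ∈ convexHull ℝ X) (hqF : ∀ i, q i ∈ F) : q ∈ convF F X := by
  obtain ⟨ι, hι, z, w, hzX, hai, hw0, hw1, hwz⟩ := eq_pos_convex_span_of_mem_convexHull hq
  let e := (Fintype.equivFin ι).symm
  refine ⟨Fintype.card ι, fun j => w (e j), fun j => z (e j), ?_, ?_, ?_, ?_, ?_⟩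
  · intro j
    refine gram_weights_mem (ω := fun j => w (e j)) (x := fun j => z (e j)) F
      (hai.comp_embedding e.toEmbedding)
      (fun j i => hX _ (hzX ⟨e j, rfl⟩) i) hqF ?_ ?_ j
    · rw [Equiv.sum_comp e w, hw1]
    · rw [Equiv.sum_comp e fun i => w i • z i, hwz]
  · exact fun j => (hw0 (e j)).le
  · exact fun j => hzX ⟨e j, rfl⟩
  · rw [Equiv.sum_comp e w, hw1]
  · rw [Equiv.sum_comp e fun i => w i • z i, hwz]

lemma relint_comb {C : Set (EuclideanSpace ℝ (Fin n))} (hC : Convex ℝ C)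
    {a b : EuclideanSpace ℝ (Fin n)} {t : ℝ} (ha : a ∈ relintSet C) (hb : b ∈ C)
    (ht0 : 0 < t) (ht1 : t ≤ 1) : t • a + (1 - t) • b ∈ relintSet C := by
  obtain ⟨haC, hrel⟩ := ha
  refine ⟨hC haC hb ht0.le (by linarith) (by ring), fun y hy => ?_⟩
  obtain ⟨z', hz', s', hs'0, hs'1, hEq⟩ := hrel y hy
  have hts : t * s' < 1 := by nlinarith
  have hne : (1 : ℝ) - t * s' > 0 := by linarith
  refine ⟨(t * (1 - s') / (1 - t * s')) • z' + ((1 - t) / (1 - t * s')) • b,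
    hC hz' hb (div_nonneg (by nlinarith) hne.le) (div_nonneg (by linarith) hne.le)
      (by rw [← add_div, div_eq_one_iff_eq (by linarith)]; ring),
    t * s', mul_pos ht0 hs'0, hts, ?_⟩
  rw [hEq]
  match_scalars <;> field_simp

lemma lemmaD (F : Subfield ℝ) {X W : Set (EuclideanSpace ℝ (Fin n))}
    {p : EuclideanSpace ℝ (Fin n)}
    (h1 : p ∈ convF F W) (h2 : p ∈ relintSet (convexHull ℝ X))
    (h3 : convF F W ⊆ convexHull ℝ X)
    (h4 : ∀ y ∈ convF F W, ∀ i, y i ∈ F)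
    (h5 : ∀ z ∈ convexHull ℝ X, (∀ i, z i ∈ F) → z ∈ convF F W) :
    p ∈ relintF F W := by
  refine ⟨h1, fun y hy => ?_⟩
  obtain ⟨z, hz, t, ht0, ht1, hEq⟩ := h2.2 y (h3 hy)
  obtain ⟨ρ, hρ0, hρt⟩ := exists_rat_btwn ht0
  set t' : ℝ := (ρ : ℝ) with ht'
  have ht'0 : 0 < t' := by exact_mod_cast hρ0
  have ht't : t' < t := hρt
  have ht'1 : t' < 1 := ht't.trans ht1
  have hne : (1 : ℝ) - t' ≠ 0 := by linarith
  set z' : EuclideanSpace ℝ (Fin n) := (1 - t')⁻¹ • (p - t' • y) with hz'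
  have hz'C : z' ∈ convexHull ℝ X := by
    have hcomb : z' = ((t - t')/(1 - t')) • y + ((1 - t)/(1 - t')) • z := by
      rw [hz', hEq]
      match_scalars <;> field_simp
    rw [hcomb]
    exact (convex_convexHull ℝ X) (h3 hy) hz (div_nonneg (by linarith) (by linarith))
      (div_nonneg (by linarith) (by linarith))
      (by rw [← add_div, div_eq_one_iff_eq hne]; ring)
  have hz'F : ∀ i, z' i ∈ F := by
    intro i
    have : z' i = (1 - t')⁻¹ * (p i - t' * y i) := rfl
    rw [this]
    exact mul_mem (inv_mem (sub_mem (one_mem F) (SubfieldClass.ratCast_mem F ρ)))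
      (sub_mem (h4 p h1 i) (mul_mem (SubfieldClass.ratCast_mem F ρ) (h4 y hy i)))
  refine ⟨z', h5 z' hz'C hz'F, t', SubfieldClass.ratCast_mem F ρ, ht'0, ht'1, ?_⟩
  rw [hz', smul_inv_smul₀ hne, add_sub_cancel]

theorem posWeakFFace_iff_proper_weakFFace (F : Subfield ℝ)
    (X : Set (EuclideanSpace ℝ (Fin n)))
    (hX : ∀ x ∈ X, ∀ i, x i ∈ F)
    (hP : IsPolyhedron (convexHull ℝ X))
    (h0 : (0 : EuclideanSpace ℝ (Fin n)) ∈ relintSet (convexHull ℝ X))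
    (Y : Set (EuclideanSpace ℝ (Fin n))) (hYX : Y ⊆ X) :
    IsPosWeakFFace F X Y ↔ Y ≠ X ∧ IsWeakFFace F X Y := by
  have h0F : ∀ i, (0 : EuclideanSpace ℝ (Fin n)) i ∈ F := fun _ => zero_mem F
  have hXunion : ∀ U ⊆ X, convexHull ℝ (U ∪ {0}) ⊆ convexHull ℝ X := by
    intro U hUX
    refine convexHull_min ?_ (convex_convexHull ℝ X)
    rintro u (hu | rfl)
    · exact subset_convexHull ℝ X (hUX hu)
    · exact h0.1
  constructor
  · rintro ⟨hwf, hpos⟩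
    refine ⟨?_, hwf⟩
    intro hYeq
    subst hYeq
    have h0conv : (0 : EuclideanSpace ℝ (Fin n)) ∈ convF F Y := lemmaA F hX h0.1 h0F
    have h0rel : (0 : EuclideanSpace ℝ (Fin n)) ∈ relintF F (Y ∪ {0}) := by
      refine lemmaD F (X := Y) (mem_convF_of_mem F (Or.inr rfl)) h0
        ((convF_subset_convexHull F _).trans (hXunion Y le_rfl)) ?_ ?_
      · refine fun y hy => convF_coords F ?_ hy
        rintro x (hx | rfl)
        · exact hX x hx
        · exact h0F
      · exact fun z hz hzF => convF_mono F Set.subset_union_left (lemmaA F hX hz hzF)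
    exact Set.eq_empty_iff_forall_notMem.1 (hpos Y le_rfl) 0 ⟨h0conv, h0rel⟩
  · rintro ⟨hne, hwf⟩
    refine ⟨hwf, fun U hUX => ?_⟩
    by_contra hcon
    obtain ⟨p, hpY, hpU⟩ := Set.nonempty_iff_ne_empty.2 hcon
    -- p is in the relative interior of the real hull of X
    have hsub : convF F (U ∪ {0}) ⊆ convexHull ℝ X :=
      (convF_subset_convexHull F _).trans (hXunion U hUX)
    obtain ⟨z, hz, t, htF, ht0, ht1, hEq⟩ :=
      hpU.2 0 (mem_convF_of_mem F (Or.inr rfl))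
    have hpRi : p ∈ relintSet (convexHull ℝ X) := by
      rw [hEq]
      exact relint_comb (convex_convexHull ℝ X) h0 (hsub hz) ht0 ht1.le
    have hpRiF : p ∈ relintF F X := by
      refine lemmaD F (convF_mono F hYX hpY) hpRi (convF_subset_convexHull F X)
        (fun y hy => convF_coords F hX hy) (fun z hz hzF => lemmaA F hX hz hzF)
    have : X ⊆ Y := hwf.2 X le_rfl ⟨p, hpY, hpRiF⟩
    exact hne (hYX.antisymm this)
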